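/- Let Δ₂ be the convex hull of {(−2,0),(2,0),(0,1),(0,−1)} in ℝ², let k ≥ 1 be an integer, let T₀ = conv{(0,0),(2,k−1),(0,k)} ⊂ kΔ₂ (a triangle of area k), and let g : kΔ₂ → ℝ be a continuous concave W₂-invariant function. Then (1/k)·∫_{T₀} g dA ≥ (1 − 1/k)·g(0,0)/3 + (1/2)·g(2,k−1) + (1/6 + 1/(3k))·g(0,k). -/

import Mathlib

/-!
On any triangle `T = conv{a, b, c}` inside the domain, a concave `g` dominates the affine
interpolation of its vertex values, whose integral is `area T · (g a + g b + g c) / 3`; this is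
computed on the standard triangle by Fubini and transported by the affine change of variables
`u ↦ a + u₁ (b - a) + u₂ (c - a)`. The line `y = k - 1` cuts `T₀` into
`conv{(0,0), (2,k-1), (0,k-1)}` of area `k - 1` and `conv{(0,k-1), (2,k-1), (0,k)}` of area `1`.
The value at the new vertex `(0, k-1)` is then traded for the values at `(2, k-1)` and `(0, k)`:
it is the midpoint of `(±2, k-1)` and lies between `(0, ±k)`, so concavity and `W₂`-invariance
bound it below by both.
-/
open MeasureTheory Pointwise

noncomputable section

/-- The moment polytope of `X₂ = (ℙ¹×ℙ¹)/(ℤ/4ℤ)` polarized by `-2K`. -/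
def Δ₂ : Set (ℝ × ℝ) := convexHull ℝ {((-2 : ℝ), (0 : ℝ)), (2, 0), (0, 1), (0, -1)}

/-- The triangle `T₀ = conv{(0,0),(2,k-1),(0,k)} ⊂ kΔ₂` (of area `k`). -/
def T₀ (k : ℕ) : Set (ℝ × ℝ) :=
  convexHull ℝ {((0 : ℝ), (0 : ℝ)), ((2 : ℝ), (k : ℝ) - 1), ((0 : ℝ), (k : ℝ))}

open Set

section ConvexGeometry

variable {E : Type*} [AddCommGroup E] [Module ℝ E]

theorem add_smul_add_smul_mem_convexHull {a b c : E} {α β γ : ℝ} (hα : 0 ≤ α) (hβ : 0 ≤ β)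
    (hγ : 0 ≤ γ) (h : α + β + γ = 1) : α • a + β • b + γ • c ∈ convexHull ℝ {a, b, c} := by
  have := (convex_convexHull ℝ ({a, b, c} : Set E)).sum_mem
    (t := Finset.univ) (w := ![α, β, γ]) (z := ![a, b, c])
    (fun i _ => by fin_cases i <;> simpa)
    (by simp [Fin.sum_univ_three, h])
    (fun i _ => subset_convexHull ℝ _ (by fin_cases i <;> simp))
  simpa [Fin.sum_univ_three] using this

theorem ConcaveOn.le_map_add_smul_add_smul {s : Set E} {g : E → ℝ} (hg : ConcaveOn ℝ s g)
    {a b c : E} (ha : a ∈ s) (hb : b ∈ s) (hc : c ∈ s) {α β γ : ℝ} (hα : 0 ≤ α) (hβ : 0 ≤ β)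
    (hγ : 0 ≤ γ) (h : α + β + γ = 1) :
    α * g a + β * g b + γ * g c ≤ g (α • a + β • b + γ • c) := by
  have := hg.le_map_sum (t := Finset.univ) (w := ![α, β, γ]) (p := ![a, b, c])
    (fun i _ => by fin_cases i <;> simpa)
    (by simp [Fin.sum_univ_three, h])
    (fun i _ => by fin_cases i <;> simpa)
  simpa [Fin.sum_univ_three] using this

theorem ConcaveOn.le_of_mem_segment_of_eq {s : Set E} {g : E → ℝ} (hg : ConcaveOn ℝ s g)
    {x y z : E} (hx : x ∈ s) (hy : y ∈ s) (hxy : g x = g y) (hz : z ∈ segment ℝ x y) :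
    g y ≤ g z := by
  simpa [hxy] using hg.ge_on_segment hx hy hz

theorem mk_mem_segment_mk_left {x x₁ x₂ : ℝ} (y : E) (hx : x ∈ uIcc x₁ x₂) :
    (x, y) ∈ segment ℝ (x₁, y) (x₂, y) := by
  rw [← Prod.image_mk_segment_left, segment_eq_uIcc]
  exact mem_image_of_mem _ hx

theorem mk_mem_segment_mk_right (x : E) {y y₁ y₂ : ℝ} (hy : y ∈ uIcc y₁ y₂) :
    (x, y) ∈ segment ℝ (x, y₁) (x, y₂) := by
  rw [← Prod.image_mk_segment_right, segment_eq_uIcc]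
  exact mem_image_of_mem _ hy

theorem segment_eq_union_of_mem {a c m : E} (hm : m ∈ segment ℝ a c) :
    segment ℝ a c = segment ℝ a m ∪ segment ℝ m c := by
  rw [segment_eq_image_lineMap] at hm
  obtain ⟨t, ⟨ht0, ht1⟩, rfl⟩ := hm
  have hseg : ∀ s u : ℝ, segment ℝ (AffineMap.lineMap a c s) (AffineMap.lineMap a c u)
      = AffineMap.lineMap a c '' uIcc s u := fun s u => by
    rw [← image_segment, segment_eq_uIcc]
  calc segment ℝ a c = AffineMap.lineMap a c '' Icc (0 : ℝ) 1 := segment_eq_image_lineMap ℝ a c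
    _ = AffineMap.lineMap a c '' (uIcc 0 t ∪ uIcc t 1) := by
      rw [uIcc_of_le ht0, uIcc_of_le ht1, Icc_union_Icc_eq_Icc ht0 ht1]
    _ = _ := by
      rw [image_union, ← hseg, ← hseg, AffineMap.lineMap_apply_zero, AffineMap.lineMap_apply_one]

theorem convexHull_triple_eq_union {a b c m : E} (hm : m ∈ segment ℝ a c) :
    convexHull ℝ {a, b, c} = convexHull ℝ {a, b, m} ∪ convexHull ℝ {m, b, c} := by
  simp only [insert_comm a b, insert_comm m b]
  rw [convexHull_insert (insert_nonempty _ _), convexHull_insert (insert_nonempty _ _),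
    convexHull_insert (insert_nonempty _ _), convexHull_pair, convexHull_pair, convexHull_pair,
    segment_eq_union_of_mem hm, convexJoin_union_right]

end ConvexGeometry

theorem integral_quadratic (a b c t : ℝ) :
    ∫ x in (0 : ℝ)..t, (a + b * x + c * x ^ 2) = a * t + b * t ^ 2 / 2 + c * t ^ 3 / 3 := by
  have hint : ∀ f : ℝ → ℝ, Continuous f → IntervalIntegrable f volume 0 t :=
    fun f hf => hf.intervalIntegrable 0 t
  rw [intervalIntegral.integral_add (hint _ (by fun_prop)) (hint _ (by fun_prop)),
    intervalIntegral.integral_add (hint _ (by fun_prop)) (hint _ (by fun_prop)),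
    intervalIntegral.integral_const_mul, intervalIntegral.integral_const_mul, integral_id,
    integral_pow]
  simp
  ring

theorem setIntegral_eq_integral_Icc_Icc {F : Type*} [NormedAddCommGroup F] [NormedSpace ℝ F]
    {f : ℝ × ℝ → F} {s : Set ℝ} {lo hi : ℝ → ℝ}
    (hs : MeasurableSet s) (hlo : Measurable lo) (hhi : Measurable hi)
    (hf : IntegrableOn f {p | p.1 ∈ s ∧ p.2 ∈ Icc (lo p.1) (hi p.1)}) :
    ∫ p in {p | p.1 ∈ s ∧ p.2 ∈ Icc (lo p.1) (hi p.1)}, f p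
      = ∫ x in s, ∫ y in Icc (lo x) (hi x), f (x, y) := by
  set R := {p : ℝ × ℝ | p.1 ∈ s ∧ p.2 ∈ Icc (lo p.1) (hi p.1)}
  have hR : MeasurableSet R :=
    (measurable_fst hs).inter
      ((measurableSet_le (hlo.comp measurable_fst) measurable_snd).inter
        (measurableSet_le measurable_snd (hhi.comp measurable_fst)))
  have hslice : ∀ x y, R.indicator f (x, y)
      = s.indicator (fun x => (Icc (lo x) (hi x)).indicator (fun y => f (x, y)) y) x := by
    intro x y
    by_cases hx : x ∈ s <;> by_cases hy : y ∈ Icc (lo x) (hi x) <;>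
      simp only [indicator, R, mem_ofPred_eq, hx, hy, true_and, false_and, if_true, if_false]
  rw [← integral_indicator hR, Measure.volume_eq_prod,
    integral_prod _ (by simpa [Measure.volume_eq_prod] using (integrable_indicator_iff hR).2 hf),
    ← integral_indicator hs]
  congr 1
  funext x
  by_cases hx : x ∈ s <;> simp [hslice, hx, integral_indicator measurableSet_Icc]

theorem volume_setOf_snd_eq (c : ℝ) : volume {p : ℝ × ℝ | p.2 = c} = 0 := by
  rw [show {p : ℝ × ℝ | p.2 = c} = univ ×ˢ {c} by ext; simp, Measure.volume_eq_prod,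
    Measure.prod_prod, Real.volume_singleton, mul_zero]

theorem aedisjoint_convexHull_of_snd_le_of_le {s t : Set (ℝ × ℝ)} {c : ℝ}
    (hs : ∀ p ∈ s, p.2 ≤ c) (ht : ∀ p ∈ t, c ≤ p.2) :
    AEDisjoint volume (convexHull ℝ s) (convexHull ℝ t) := by
  have hs' := convexHull_min hs (convex_halfSpace_le (LinearMap.snd ℝ ℝ ℝ).isLinear c)
  have ht' := convexHull_min ht (convex_halfSpace_ge (LinearMap.snd ℝ ℝ ℝ).isLinear c)
  exact measure_mono_null (fun p hp => le_antisymm (hs' hp.1) (ht' hp.2)) (volume_setOf_snd_eq c)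

theorem ContinuousOn.integrableOn_convexHull {E F : Type*} [NormedAddCommGroup E]
    [NormedSpace ℝ E] [MeasurableSpace E] [OpensMeasurableSpace E] [NormedAddCommGroup F]
    {μ : Measure E} [IsFiniteMeasureOnCompacts μ] {K s : Set E} {g : E → F}
    (hg : ContinuousOn g K) (hK : Convex ℝ K) (hs : s.Finite) (hsK : s ⊆ K) :
    IntegrableOn g (convexHull ℝ s) μ :=
  (hg.mono (hK.convexHull_subset_iff.2 hsK)).integrableOn_compact (hs.isCompact_convexHull ℝ)

section StdTriangle

def stdTriangle : Set (ℝ × ℝ) := {p | 0 ≤ p.1 ∧ 0 ≤ p.2 ∧ p.1 + p.2 ≤ 1}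

theorem convex_stdTriangle : Convex ℝ stdTriangle := by
  rintro x ⟨hx1, hx2, hx3⟩ y ⟨hy1, hy2, hy3⟩ s t hs ht hst
  simp only [stdTriangle, mem_ofPred_eq, Prod.fst_add, Prod.snd_add, Prod.smul_fst, Prod.smul_snd,
    smul_eq_mul]
  refine ⟨by positivity, by positivity, by nlinarith⟩

theorem convexHull_zero_fst_snd : convexHull ℝ {(0, 0), (1, 0), (0, 1)} = stdTriangle := by
  refine (convexHull_min ?_ convex_stdTriangle).antisymm fun p ⟨h1, h2, h3⟩ => ?_
  · rintro p (rfl | rfl | rfl) <;> norm_num [stdTriangle]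
  · convert add_smul_add_smul_mem_convexHull (a := ((0 : ℝ), (0 : ℝ))) (b := (1, 0)) (c := (0, 1))
      (by linarith) h1 h2 (by ring : (1 - p.1 - p.2) + p.1 + p.2 = 1)
    ext <;> simp

theorem isCompact_stdTriangle : IsCompact stdTriangle :=
  convexHull_zero_fst_snd ▸ (toFinite _).isCompact_convexHull ℝ

theorem measurableSet_stdTriangle : MeasurableSet stdTriangle :=
  isCompact_stdTriangle.isClosed.measurableSet

theorem integral_stdTriangle (A B C : ℝ) :
    ∫ p in stdTriangle, (A + B * p.1 + C * p.2) = A / 2 + B / 6 + C / 6 := by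
  have hS : stdTriangle = {p | p.1 ∈ Icc 0 1 ∧ p.2 ∈ Icc 0 (1 - p.1)} := by
    ext p
    simp only [stdTriangle, mem_ofPred_eq, mem_Icc]
    constructor
    · rintro ⟨h1, h2, h3⟩; exact ⟨⟨h1, by linarith⟩, h2, by linarith⟩
    · rintro ⟨⟨h1, -⟩, h2, h3⟩; exact ⟨h1, h2, by linarith⟩
  have hint : IntegrableOn (fun p : ℝ × ℝ => A + B * p.1 + C * p.2) stdTriangle :=
    (by fun_prop : Continuous fun p : ℝ × ℝ => A + B * p.1 + C * p.2).continuousOn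
      |>.integrableOn_compact isCompact_stdTriangle
  rw [hS] at hint ⊢
  rw [setIntegral_eq_integral_Icc_Icc (lo := fun _ => 0) (hi := fun x => 1 - x) measurableSet_Icc
    (by fun_prop) (by fun_prop) hint]
  have inner : ∀ x ∈ Icc (0 : ℝ) 1, ∫ y in Icc 0 (1 - x), (A + B * x + C * y)
      = (A + C / 2) + (B - A - C) * x + (C / 2 - B) * x ^ 2 := by
    intro x hx
    rw [integral_Icc_eq_integral_Ioc, ← intervalIntegral.integral_of_le (by linarith [hx.2])]
    have h := integral_quadratic (A + B * x) C 0 (1 - x)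
    simp only [zero_mul, add_zero] at h
    rw [h]
    ring
  rw [setIntegral_congr_fun measurableSet_Icc inner, integral_Icc_eq_integral_Ioc,
    ← intervalIntegral.integral_of_le zero_le_one, integral_quadratic]
  ring

theorem volume_stdTriangle : volume stdTriangle = ENNReal.ofReal (1 / 2) := by
  have h := integral_stdTriangle 1 0 0
  norm_num [setIntegral_const] at h
  rw [← h, measureReal_def, ENNReal.ofReal_toReal isCompact_stdTriangle.measure_lt_top.ne]

end StdTriangle

section Triangle

variable (a b c : ℝ × ℝ)

def triangleLinear : ℝ × ℝ →L[ℝ] ℝ × ℝ :=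
  (ContinuousLinearMap.fst ℝ ℝ ℝ).smulRight (b - a) +
    (ContinuousLinearMap.snd ℝ ℝ ℝ).smulRight (c - a)

@[simp] theorem triangleLinear_apply (u : ℝ × ℝ) :
    triangleLinear a b c u = u.1 • (b - a) + u.2 • (c - a) := rfl

theorem det_triangleLinear :
    (triangleLinear a b c).det = (b.1 - a.1) * (c.2 - a.2) - (c.1 - a.1) * (b.2 - a.2) := by
  rw [ContinuousLinearMap.det, ← LinearMap.det_toMatrix (Module.Basis.finTwoProd ℝ),
    Matrix.det_fin_two]
  simp [LinearMap.toMatrix_apply]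

theorem image_add_triangleLinear (s : Set (ℝ × ℝ)) :
    (fun u => a + triangleLinear a b c u) '' s = a +ᵥ triangleLinear a b c '' s := by
  rw [← Set.image_vadd, Set.image_image]; rfl

theorem image_stdTriangle :
    (fun u => a + triangleLinear a b c u) '' stdTriangle = convexHull ℝ {a, b, c} := by
  rw [image_add_triangleLinear, ← convexHull_zero_fst_snd, ← ContinuousLinearMap.coe_coe,
    LinearMap.image_convexHull, ← convexHull_vadd]
  congr 1
  simp [Set.image_insert_eq, Set.vadd_set_insert]

theorem volume_convexHull_triple :
    volume (convexHull ℝ {a, b, c}) = ENNReal.ofReal |(triangleLinear a b c).det / 2| := by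
  rw [← image_stdTriangle, image_add_triangleLinear, measure_vadd,
    Measure.addHaar_image_continuousLinearMap, volume_stdTriangle,
    ← ENNReal.ofReal_mul (abs_nonneg _), abs_div, abs_two]
  ring_nf

theorem setIntegral_convexHull_triple {g : ℝ × ℝ → ℝ} (hdet : (triangleLinear a b c).det ≠ 0) :
    ∫ x in convexHull ℝ {a, b, c}, g x
      = |(triangleLinear a b c).det| * ∫ u in stdTriangle, g (a + triangleLinear a b c u) := by
  have hinj : Function.Injective (triangleLinear a b c) :=
    ((triangleLinear a b c : ℝ × ℝ →ₗ[ℝ] ℝ × ℝ).equivOfDetNeZero hdet).injective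
  have hderiv : ∀ u ∈ stdTriangle, HasFDerivWithinAt (fun u => a + triangleLinear a b c u)
      (triangleLinear a b c) stdTriangle u :=
    fun u _ => ((triangleLinear a b c).hasFDerivAt.const_add a).hasFDerivWithinAt
  rw [← image_stdTriangle, integral_image_eq_integral_abs_det_fderiv_smul volume
    measurableSet_stdTriangle hderiv ((add_right_injective a).comp hinj).injOn, integral_smul,
    smul_eq_mul]

variable {a b c}

theorem ConcaveOn.interpolation_le_comp_triangleLinear {K : Set (ℝ × ℝ)} {g : ℝ × ℝ → ℝ}
    (hconc : ConcaveOn ℝ K g) (ha : a ∈ K) (hb : b ∈ K) (hc : c ∈ K) {u : ℝ × ℝ}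
    (hu : u ∈ stdTriangle) :
    g a + (g b - g a) * u.1 + (g c - g a) * u.2 ≤ g (a + triangleLinear a b c u) := by
  obtain ⟨h1, h2, h3⟩ := hu
  have hcomb : a + triangleLinear a b c u = (1 - u.1 - u.2) • a + u.1 • b + u.2 • c := by
    ext <;> simp <;> ring
  have := hconc.le_map_add_smul_add_smul ha hb hc (by linarith : 0 ≤ 1 - u.1 - u.2) h1 h2 (by ring)
  rw [hcomb]
  linarith

theorem ConcaveOn.le_setIntegral_triangle {K : Set (ℝ × ℝ)} {g : ℝ × ℝ → ℝ}
    (hg : ContinuousOn g K) (hconc : ConcaveOn ℝ K g) (ha : a ∈ K) (hb : b ∈ K) (hc : c ∈ K) :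
    volume.real (convexHull ℝ {a, b, c}) * ((g a + g b + g c) / 3) ≤
      ∫ x in convexHull ℝ {a, b, c}, g x := by
  rw [measureReal_def, volume_convexHull_triple, ENNReal.toReal_ofReal (abs_nonneg _), abs_div,
    abs_two]
  rcases eq_or_ne (triangleLinear a b c).det 0 with hdet | hdet
  · rw [setIntegral_measure_zero _ (by rw [volume_convexHull_triple, hdet]; simp), hdet]
    simp
  have hmaps : MapsTo (fun u => a + triangleLinear a b c u) stdTriangle K := fun u hu =>
    hconc.1.convexHull_subset_iff.2 (by simp [insert_subset_iff, ha, hb, hc])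
      (image_stdTriangle a b c ▸ mem_image_of_mem _ hu)
  rw [setIntegral_convexHull_triple a b c hdet]
  calc |(triangleLinear a b c).det| / 2 * ((g a + g b + g c) / 3)
      = |(triangleLinear a b c).det| *
          ∫ u in stdTriangle, (g a + (g b - g a) * u.1 + (g c - g a) * u.2) := by
        rw [integral_stdTriangle]; ring
    _ ≤ |(triangleLinear a b c).det| * ∫ u in stdTriangle, g (a + triangleLinear a b c u) := by
        refine mul_le_mul_of_nonneg_left (setIntegral_mono_on ?_ ?_ measurableSet_stdTriangle
          fun u hu => hconc.interpolation_le_comp_triangleLinear ha hb hc hu) (abs_nonneg _)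
        · exact (Continuous.continuousOn (by fun_prop)).integrableOn_compact isCompact_stdTriangle
        · exact (hg.comp (by fun_prop) hmaps).integrableOn_compact isCompact_stdTriangle

end Triangle

theorem mem_Δ₂_of_abs {x y : ℝ} (h : |x| / 2 + |y| ≤ 1) : (x, y) ∈ Δ₂ := by
  -- weights: positive and negative parts of `x / 2` and `y` on the four vertices, with the
  -- slack `1 - |x| / 2 - |y|` split evenly between `(-2, 0)` and `(2, 0)`
  have hr : 0 ≤ 1 - |x| / 2 - |y| := by linarith
  have hx := max_zero_add_max_neg_zero_eq_abs_self (x / 2)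
  have hx' := max_zero_sub_max_neg_zero_eq_self (x / 2)
  have hy := max_zero_add_max_neg_zero_eq_abs_self y
  have hy' := max_zero_sub_max_neg_zero_eq_self y
  rw [abs_div, abs_two] at hx
  have := (convex_convexHull ℝ ({((-2 : ℝ), (0 : ℝ)), (2, 0), (0, 1), (0, -1)} :
      Set (ℝ × ℝ))).sum_mem
    (t := Finset.univ) (z := ![((-2 : ℝ), (0 : ℝ)), (2, 0), (0, 1), (0, -1)])
    (w := ![max (-(x / 2)) 0 + (1 - |x| / 2 - |y|) / 2, max (x / 2) 0 + (1 - |x| / 2 - |y|) / 2,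
      max y 0, max (-y) 0])
    (fun i _ => by fin_cases i <;> simp <;> positivity)
    (by simp [Fin.sum_univ_four]; linarith)
    (fun i _ => subset_convexHull ℝ _ (by fin_cases i <;> simp))
  rw [Fin.sum_univ_four] at this
  unfold Δ₂
  convert this using 1
  ext <;> simp <;> linarith

theorem mem_smul_Δ₂_of_abs {k x y : ℝ} (hk : 0 < k) (h : |x| / 2 + |y| ≤ k) :
    (x, y) ∈ k • Δ₂ := by
  rw [mem_smul_set_iff_inv_smul_mem₀ hk.ne', Prod.smul_mk, smul_eq_mul, smul_eq_mul]
  apply mem_Δ₂_of_abs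
  rw [abs_mul, abs_mul, abs_inv, abs_of_pos hk]
  calc k⁻¹ * |x| / 2 + k⁻¹ * |y| = (|x| / 2 + |y|) / k := by field_simp
    _ ≤ 1 := (div_le_one hk).2 h

theorem ConcaveOn.le_apply_zero_sub_one {k : ℝ} (hk : 1 ≤ k) {g : ℝ × ℝ → ℝ}
    (hconc : ConcaveOn ℝ (k • Δ₂) g)
    (hinv : ∀ p ∈ k • Δ₂, g (-p.1, p.2) = g p ∧ g (p.1, -p.2) = g p) :
    g (2, k - 1) ≤ g (0, k - 1) ∧ g (0, k) ≤ g (0, k - 1) := by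
  have hk0 : |k - 1| = k - 1 := abs_of_nonneg (by linarith)
  have hk1 : |k| = k := abs_of_pos (by linarith)
  have hmem : ∀ x y : ℝ, |x| / 2 + |y| ≤ k → (x, y) ∈ k • Δ₂ :=
    fun x y h => mem_smul_Δ₂_of_abs (by linarith) h
  have hB := hmem 2 (k - 1) (by norm_num [hk0])
  have hC := hmem 0 k (by simp [hk1])
  constructor
  · refine hconc.le_of_mem_segment_of_eq (hmem (-2) (k - 1) (by norm_num [hk0])) hB
      (by simpa using (hinv _ hB).1) (mk_mem_segment_mk_left _ (by rw [uIcc_of_le] <;> norm_num))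
  · refine hconc.le_of_mem_segment_of_eq (hmem 0 (-k) (by simp [hk1])) hC
      (by simpa using (hinv _ hC).2)
      (mk_mem_segment_mk_right _ (by rw [uIcc_of_le (by linarith)]; constructor <;> linarith))

/-- Estimate on the top triangle `T₀` for a continuous concave `W₂`-invariant `g` on `kΔ₂`:
`(1/k)∫_{T₀} g ≥ (1 − 1/k)·g(0,0)/3 + (1/2)·g(2,k−1) + (1/6 + 1/(3k))·g(0,k)`. -/
theorem top_triangle_estimate_X2 (k : ℕ) (hk : 1 ≤ k) (g : ℝ × ℝ → ℝ)
    (hg : ContinuousOn g ((k : ℝ) • Δ₂)) (hconc : ConcaveOn ℝ ((k : ℝ) • Δ₂) g)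
    (hinv : ∀ p ∈ (k : ℝ) • Δ₂, g (-p.1, p.2) = g p ∧ g (p.1, -p.2) = g p) :
    (1 / (k : ℝ)) * (∫ x in T₀ k, g x) ≥
      (1 - 1 / (k : ℝ)) * g ((0 : ℝ), (0 : ℝ)) / 3
        + (1 / 2) * g ((2 : ℝ), (k : ℝ) - 1)
        + (1 / 6 + 1 / (3 * (k : ℝ))) * g ((0 : ℝ), (k : ℝ)) := by
  have hk1 : (1 : ℝ) ≤ k := by exact_mod_cast hk
  have hk0 : (0 : ℝ) < k := by linarith
  have habs : |(k : ℝ) - 1| = k - 1 := abs_of_nonneg (by linarith)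
  have hO := mem_smul_Δ₂_of_abs (x := 0) (y := 0) hk0 (by simp)
  have hB := mem_smul_Δ₂_of_abs (x := 2) (y := k - 1) hk0 (by norm_num [habs])
  have hM := mem_smul_Δ₂_of_abs (x := 0) (y := k - 1) hk0 (by norm_num [habs])
  have hC := mem_smul_Δ₂_of_abs (x := 0) (y := k) hk0 (by simp)
  have hMseg := mk_mem_segment_mk_right (0 : ℝ) (y := (k : ℝ) - 1) (y₁ := 0) (y₂ := k)
    (by rw [uIcc_of_le hk0.le]; constructor <;> linarith)
  rw [T₀, convexHull_triple_eq_union hMseg, setIntegral_union₀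
    (aedisjoint_convexHull_of_snd_le_of_le (c := k - 1) (by simp; linarith) (by simp))
    ((toFinite _).isClosed_convexHull ℝ).measurableSet.nullMeasurableSet
    (hg.integrableOn_convexHull hconc.1 (toFinite _) (by simp [insert_subset_iff, hO, hB, hM]))
    (hg.integrableOn_convexHull hconc.1 (toFinite _) (by simp [insert_subset_iff, hM, hB, hC]))]
  have h₁ := hconc.le_setIntegral_triangle hg hO hB hM
  have h₂ := hconc.le_setIntegral_triangle hg hM hB hC
  rw [measureReal_def, volume_convexHull_triple, det_triangleLinear] at h₁ h₂
  norm_num [habs, ENNReal.toReal_ofReal (sub_nonneg.2 hk1)] at h₁ h₂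
  obtain ⟨hgB, hgC⟩ := hconc.le_apply_zero_sub_one hk1 hinv
  rw [ge_iff_le, one_div_mul_eq_div (k : ℝ), le_div_iff₀ hk0]
  have e : ∀ a b c : ℝ, ((1 - 1 / (k : ℝ)) * a / 3 + 1 / 2 * b + (1 / 6 + 1 / (3 * k)) * c) * k
      = (k - 1) * a / 3 + k * b / 2 + (k / 6 + 1 / 3) * c := by intros; field_simp
  rw [e]
  linarith [mul_le_mul_of_nonneg_left hgB hk0.le, mul_le_mul_of_nonneg_left hgC hk0.le]
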